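/- Let m ≥ 1, let T : ℝ^m → ℝ^m be continuous, let n ≥ 1, let G₁, …, G_n : ℝ^m → ℝ^m be continuous, and let ε > 0. Then there exist one-hidden-layer ReLU networks A⁽¹⁾, …, A⁽ⁿ⁾ : ℝ^m → ℝ^m such that the recurrence H⁽⁰⁾(x) = x, H⁽ᵗ⁾(x) = T(H⁽ᵗ⁻¹⁾(x)) + A⁽ᵗ⁾(H⁽ᵗ⁻¹⁾(x)) for t = 1, …, n satisfies sup_{x ∈ [0,1]^m} ‖H⁽ⁿ⁾(x) − (G_n ∘ ⋯ ∘ G₁)(x)‖_∞ ≤ ε. (The n-step ScaleNet recurrence with a fixed shared layer T and per-step adapters can uniformly track any prescribed composition of n continuous maps on the input cube; this is the skeleton of Steps 2–3 of the proof of Theorem 1, where the recurrent structure implements the quantization followed by the lookup-table value mapping.) -/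

import Mathlib

/-!
Adapter `t` is taken to approximate `G t - T` uniformly on a compact neighbourhood of the image of
the cube under `G (t - 1) ∘ ⋯ ∘ G 1`. Uniform continuity of `G t` there keeps the error inherited
from the earlier steps small, so choosing the accuracies backwards from step `n` gives the bound.

Such adapters exist because one-hidden-layer ReLU networks are uniformly dense on compact sets:
the ridge exponentials `x ↦ exp (ℓ x)` span a point-separating subalgebra, hence a dense one by
Stone–Weierstrass, and each of them is a uniform limit of sums of ReLU ridge functions, since in one
variable piecewise linear interpolants are sums of ramps.
-/

/-- A one-hidden-layer ReLU network from ℝ^m to ℝ^p: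
`x ↦ W₂ · σ(W₁ x + b₁) + b₂` with componentwise ReLU `σ(t) = max t 0`. -/
def IsReLUNet {m p : ℕ} (A : (Fin m → ℝ) → (Fin p → ℝ)) : Prop :=
  ∃ (k : ℕ) (W₁ : Matrix (Fin k) (Fin m) ℝ) (b₁ : Fin k → ℝ)
    (W₂ : Matrix (Fin p) (Fin k) ℝ) (b₂ : Fin p → ℝ),
    ∀ x, A x = W₂.mulVec (fun i => max (W₁.mulVec x i + b₁ i) 0) + b₂

/-- The ScaleNet recurrence: `H⁽⁰⁾(x) = x`,
`H⁽ᵗ⁾(x) = T(H⁽ᵗ⁻¹⁾(x)) + A⁽ᵗ⁾(H⁽ᵗ⁻¹⁾(x))`. -/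
def scaleNetIter {m : ℕ} (T : (Fin m → ℝ) → (Fin m → ℝ))
    (A : ℕ → (Fin m → ℝ) → (Fin m → ℝ)) : ℕ → (Fin m → ℝ) → (Fin m → ℝ)
  | 0 => fun x => x
  | (t + 1) => fun x => T (scaleNetIter T A t x) + A (t + 1) (scaleNetIter T A t x)

/-- The composition `G_t ∘ ⋯ ∘ G₁` of a sequence of maps (the empty composition
being the identity). -/
def compSeq {m : ℕ} (G : ℕ → (Fin m → ℝ) → (Fin m → ℝ)) : ℕ → (Fin m → ℝ) → (Fin m → ℝ)
  | 0 => fun x => x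
  | (t + 1) => fun x => G (t + 1) (compSeq G t x)

open Set

section RidgeReLU

variable (E : Type*) [AddCommGroup E] [TopologicalSpace E] [Module ℝ E]

def reluSpan : Submodule ℝ (E → ℝ) :=
  Submodule.span ℝ (range fun p : StrongDual ℝ E × ℝ => fun x => max (p.1 x + p.2) 0)

variable {E}

theorem relu_mem_reluSpan (ℓ : StrongDual ℝ E) (b : ℝ) :
    (fun x => max (ℓ x + b) 0) ∈ reluSpan E :=
  Submodule.subset_span ⟨(ℓ, b), rfl⟩

theorem const_mem_reluSpan (c : ℝ) : (fun _ : E => c) ∈ reluSpan E := by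
  convert (reluSpan E).smul_mem c (relu_mem_reluSpan 0 1) using 1
  ext; simp

theorem continuous_of_mem_reluSpan {h : E → ℝ} (hh : h ∈ reluSpan E) : Continuous h := by
  induction hh using Submodule.span_induction with
  | mem _ hu => obtain ⟨⟨ℓ, b⟩, rfl⟩ := hu; fun_prop
  | zero => exact continuous_const
  | add _ _ _ _ h₁ h₂ => exact h₁.add h₂
  | smul c _ _ h => exact h.const_smul c

theorem comp_mem_reluSpan {ψ : ℝ → ℝ} (hψ : ψ ∈ reluSpan ℝ) (ℓ : StrongDual ℝ E) :
    ψ ∘ ℓ ∈ reluSpan E := by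
  have : reluSpan ℝ ≤ (reluSpan E).comap (LinearMap.funLeft ℝ ℝ ℓ) := by
    refine Submodule.span_le.2 ?_
    rintro _ ⟨⟨ℓ', b⟩, rfl⟩
    exact relu_mem_reluSpan (ℓ'.comp ℓ) b
  exact this hψ

/-- `h` is the piecewise linear interpolant of `g` at `X 0 ≤ ⋯ ≤ X N`; since it is constant to the
right of `X N`, the next node is added by the single ramp `max (t - X N) 0 - max (t - X (N + 1)) 0`. -/
theorem exists_mem_reluSpan_interpolating {X : ℕ → ℝ} (hX : Monotone X) (g : ℝ → ℝ) {ε : ℝ}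
    (N : ℕ) (hosc : ∀ i < N, ∀ t ∈ Icc (X i) (X (i + 1)),
      |g (X i) - g t| ≤ ε ∧ |g (X (i + 1)) - g t| ≤ ε) (hε : 0 ≤ ε) :
    ∃ h ∈ reluSpan ℝ, (∀ t, X N ≤ t → h t = g (X N)) ∧
      ∀ t ∈ Icc (X 0) (X N), |h t - g t| ≤ ε := by
  induction N with
  | zero =>
    refine ⟨fun _ => g (X 0), const_mem_reluSpan _, fun _ _ => rfl, ?_⟩
    rintro t ⟨h₁, h₂⟩
    simp [le_antisymm h₂ h₁, hε]
  | succ N ih =>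
    obtain ⟨h, hh, hright, happrox⟩ := ih fun i hi => hosc i (by omega)
    set d := X (N + 1) - X N
    have hd : 0 ≤ d := sub_nonneg.2 (hX N.le_succ)
    let ramp : ℝ → ℝ := fun t => max (t - X N) 0 - max (t - X (N + 1)) 0
    have hramp : ramp ∈ reluSpan ℝ := by
      refine Submodule.sub_mem _ ?_ ?_ <;>
        simpa [sub_eq_add_neg] using relu_mem_reluSpan (ContinuousLinearMap.id ℝ ℝ) _
    refine ⟨h + ((g (X (N + 1)) - g (X N)) / d) • ramp,
      Submodule.add_mem _ hh (Submodule.smul_mem _ _ hramp), fun t ht => ?_, fun t ht => ?_⟩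
    · have hNt : X N ≤ t := (hX N.le_succ).trans ht
      have hramp_t : ramp t = d := by
        simp only [ramp, d]
        rw [max_eq_left (by linarith), max_eq_left (by linarith)]
        ring
      simp only [Pi.add_apply, Pi.smul_apply, smul_eq_mul, hright t hNt, hramp_t]
      rcases hd.eq_or_lt with hd0 | hd0
      · have hXN : X (N + 1) = X N := by linarith
        simp [← hd0, hXN]
      · field_simp; ring
    · simp only [Pi.add_apply, Pi.smul_apply, smul_eq_mul]
      rcases le_total t (X N) with htN | hNt
      · have hramp_t : ramp t = 0 := by
          simp only [ramp]
          rw [max_eq_right (by linarith), max_eq_right (by linarith [hX N.le_succ])]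
          ring
        rw [hramp_t, mul_zero, add_zero]
        exact happrox t ⟨ht.1, htN⟩
      · have hramp_t : ramp t = t - X N := by
          simp only [ramp]
          rw [max_eq_left (by linarith), max_eq_right (by linarith [ht.2])]
          ring
        obtain ⟨hleft, hright'⟩ := hosc N N.lt_succ_self t ⟨hNt, ht.2⟩
        set μ := (t - X N) / d
        have hμ₀ : 0 ≤ μ := div_nonneg (by linarith) hd
        have hμ₁ : μ ≤ 1 := div_le_one_of_le₀ (by linarith [ht.2]) hd
        have hconvex : h t + (g (X (N + 1)) - g (X N)) / d * ramp t - g t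
            = (1 - μ) * (g (X N) - g t) + μ * (g (X (N + 1)) - g t) := by
          rw [hright t hNt, hramp_t]; simp only [μ]; ring
        rw [hconvex, abs_le]
        obtain ⟨hleft₁, hleft₂⟩ := abs_le.1 hleft
        obtain ⟨hright₁, hright₂⟩ := abs_le.1 hright'
        constructor <;> nlinarith

theorem exists_mem_reluSpan_near_real {g : ℝ → ℝ} {a b ε : ℝ} (hg : ContinuousOn g (Icc a b))
    (hε : 0 < ε) : ∃ h ∈ reluSpan ℝ, ∀ t ∈ Icc a b, |h t - g t| ≤ ε := by
  rcases lt_or_ge b a with hba | hab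
  · exact ⟨0, Submodule.zero_mem _, fun t ht => absurd (ht.1.trans ht.2) (not_le.2 hba)⟩
  obtain ⟨δ, hδ, hmod⟩ := Metric.uniformContinuousOn_iff.1
    (isCompact_Icc.uniformContinuousOn_of_continuous hg) ε hε
  obtain ⟨N, hN⟩ := exists_nat_gt ((b - a) / δ)
  have hN₀ : (0 : ℝ) < N := (div_nonneg (sub_nonneg.2 hab) hδ.le).trans_lt hN
  set Δ := (b - a) / N
  have hΔ : 0 ≤ Δ := div_nonneg (sub_nonneg.2 hab) hN₀.le
  have hΔδ : Δ < δ := by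
    rw [div_lt_iff₀ hN₀]; rw [div_lt_iff₀ hδ] at hN; linarith
  let X : ℕ → ℝ := fun i => a + i * Δ
  have hX : Monotone X := fun i j hij => by
    have : (i : ℝ) ≤ j := Nat.cast_le.2 hij
    simp only [X]; nlinarith
  have hX₀ : X 0 = a := by simp [X]
  have hXN : X N = b := by simp only [X, Δ]; field_simp; ring
  have hXa : ∀ j, a ≤ X j := fun j => hX₀ ▸ hX (Nat.zero_le j)
  have hXb : ∀ j ≤ N, X j ≤ b := fun j hj => hXN ▸ hX hj
  have hosc : ∀ i < N, ∀ t ∈ Icc (X i) (X (i + 1)),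
      |g (X i) - g t| ≤ ε ∧ |g (X (i + 1)) - g t| ≤ ε := by
    intro i hi t ht
    have hstep : X (i + 1) - X i = Δ := by simp only [X]; push_cast; ring
    have hmem : ∀ s ∈ Icc (X i) (X (i + 1)), s ∈ Icc a b := fun s hs =>
      ⟨(hXa i).trans hs.1, hs.2.trans (hXb (i + 1) hi)⟩
    have hnear : ∀ s ∈ Icc (X i) (X (i + 1)), |g s - g t| ≤ ε := fun s hs => by
      refine (hmod s (hmem s hs) t (hmem t ht) ?_).le
      rw [Real.dist_eq, abs_lt]
      constructor <;> linarith [hs.1, hs.2, ht.1, ht.2]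
    exact ⟨hnear _ ⟨le_rfl, hX i.le_succ⟩, hnear _ ⟨hX i.le_succ, le_rfl⟩⟩
  obtain ⟨h, hh, -, happrox⟩ := exists_mem_reluSpan_interpolating hX g N hosc hε.le
  rw [hX₀, hXN] at happrox
  exact ⟨h, hh, happrox⟩

section StoneWeierstrass

variable {K : Set E}

def reluSpanOn (K : Set E) : Submodule ℝ C(K, ℝ) :=
  ((reluSpan E).map (LinearMap.funLeft ℝ ℝ ((↑) : K → E))).comap
    (ContinuousMap.coeFnLinearMap ℝ)

theorem mem_reluSpanOn {φ : C(K, ℝ)} :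
    φ ∈ reluSpanOn K ↔ ∃ h ∈ reluSpan E, ∀ x : K, h x = φ x := by
  simp only [reluSpanOn, Submodule.mem_comap, Submodule.mem_map, funext_iff]
  rfl

noncomputable def expRidge (K : Set E) (ℓ : StrongDual ℝ E) : C(K, ℝ) :=
  ⟨fun x => Real.exp (ℓ x), by fun_prop⟩

theorem expRidge_mem_closure_reluSpanOn (hK : IsCompact K) (ℓ : StrongDual ℝ E) :
    expRidge K ℓ ∈ (reluSpanOn K).topologicalClosure := by
  have : CompactSpace K := isCompact_iff_compactSpace.1 hK
  obtain ⟨R, hR⟩ := (hK.image ℓ.continuous).isBounded.subset_closedBall 0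
  rw [Real.closedBall_eq_Icc, zero_sub, zero_add] at hR
  refine Metric.mem_closure_iff.2 fun ε hε => ?_
  obtain ⟨ψ, hψ, hψexp⟩ :=
    exists_mem_reluSpan_near_real Real.continuous_exp.continuousOn (half_pos hε) (a := -R) (b := R)
  refine ⟨⟨ψ ∘ ℓ ∘ (↑), (continuous_of_mem_reluSpan hψ).comp (by fun_prop)⟩,
    mem_reluSpanOn.2 ⟨ψ ∘ ℓ, comp_mem_reluSpan hψ ℓ, fun _ => rfl⟩, ?_⟩
  refine ((ContinuousMap.dist_le (half_pos hε).le).2 fun x => ?_).trans_lt (half_lt_self hε)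
  rw [dist_comm, Real.dist_eq]
  exact hψexp _ (hR ⟨x, x.2, rfl⟩)

noncomputable def expRidges (K : Set E) : Submonoid C(K, ℝ) where
  carrier := range (expRidge K)
  one_mem' := ⟨0, by ext; simp [expRidge]⟩
  mul_mem' := by
    rintro _ _ ⟨ℓ, rfl⟩ ⟨ℓ', rfl⟩
    exact ⟨ℓ + ℓ', by ext; simp [expRidge, Real.exp_add]⟩

theorem separatesPoints_adjoin_expRidges [SeparatingDual ℝ E] :
    (Algebra.adjoin ℝ (expRidges K : Set C(K, ℝ))).SeparatesPoints := by
  intro x y hxy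
  obtain ⟨ℓ, hℓ⟩ := SeparatingDual.exists_separating_of_ne (R := ℝ) (Subtype.coe_ne_coe.2 hxy)
  exact ⟨expRidge K ℓ, ⟨_, Algebra.subset_adjoin ⟨ℓ, rfl⟩, rfl⟩,
    by simpa [expRidge] using hℓ⟩

theorem reluSpanOn_topologicalClosure_eq_top [SeparatingDual ℝ E] (hK : IsCompact K) :
    (reluSpanOn K).topologicalClosure = ⊤ := by
  have : CompactSpace K := isCompact_iff_compactSpace.1 hK
  have hA : (Algebra.adjoin ℝ (expRidges K : Set C(K, ℝ))).toSubmodule ≤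
      (reluSpanOn K).topologicalClosure := by
    rw [Algebra.adjoin_eq_span, Submonoid.closure_eq]
    refine Submodule.span_le.2 ?_
    rintro _ ⟨ℓ, rfl⟩
    exact expRidge_mem_closure_reluSpanOn hK ℓ
  have htop := ContinuousMap.subalgebra_topologicalClosure_eq_top_of_separatesPoints _
    (separatesPoints_adjoin_expRidges (K := K))
  refine eq_top_iff.2 fun φ _ => ?_
  have hφ : φ ∈ closure (Algebra.adjoin ℝ (expRidges K : Set C(K, ℝ)) : Set C(K, ℝ)) := by
    rw [← Subalgebra.topologicalClosure_coe, htop]; trivial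
  exact closure_minimal hA (reluSpanOn K).isClosed_topologicalClosure hφ

theorem exists_mem_reluSpan_near [SeparatingDual ℝ E] (hK : IsCompact K) {f : E → ℝ}
    (hf : ContinuousOn f K) {ε : ℝ} (hε : 0 < ε) :
    ∃ h ∈ reluSpan E, ∀ x ∈ K, |h x - f x| ≤ ε := by
  have : CompactSpace K := isCompact_iff_compactSpace.1 hK
  let F : C(K, ℝ) := ⟨K.domRestrict f, hf.domRestrict⟩
  have hF : F ∈ closure (reluSpanOn K : Set C(K, ℝ)) := by
    rw [← Submodule.topologicalClosure_coe, reluSpanOn_topologicalClosure_eq_top hK]; trivial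
  obtain ⟨φ, hφ, hFφ⟩ := Metric.mem_closure_iff.1 hF ε hε
  obtain ⟨h, hh, hhφ⟩ := mem_reluSpanOn.1 hφ
  refine ⟨h, hh, fun x hx => ?_⟩
  rw [← Real.dist_eq, hhφ ⟨x, hx⟩, dist_comm]
  exact (ContinuousMap.dist_apply_le_dist (f := F) (g := φ) ⟨x, hx⟩).trans hFφ.le

end StoneWeierstrass

end RidgeReLU

section Networks

variable {m p : ℕ}

theorem isReLUNet_zero : IsReLUNet (0 : (Fin m → ℝ) → Fin p → ℝ) :=
  ⟨0, 0, 0, 0, 0, fun x => by simp⟩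

theorem IsReLUNet.add {A B : (Fin m → ℝ) → Fin p → ℝ} (hA : IsReLUNet A) (hB : IsReLUNet B) :
    IsReLUNet (A + B) := by
  obtain ⟨k, W₁, b₁, W₂, b₂, hA⟩ := hA
  obtain ⟨k', W₁', b₁', W₂', b₂', hB⟩ := hB
  refine ⟨k + k', Matrix.of (Fin.append (W₁ ·) (W₁' ·)), Fin.append b₁ b₁',
    fun i => Fin.append (W₂ i) (W₂' i), b₂ + b₂', fun x => ?_⟩
  ext i
  simp [hA, hB, Matrix.mulVec, dotProduct, Fin.sum_univ_add]
  ring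

theorem IsReLUNet.const_smul {A : (Fin m → ℝ) → Fin p → ℝ} (hA : IsReLUNet A) (c : ℝ) :
    IsReLUNet (c • A) := by
  obtain ⟨k, W₁, b₁, W₂, b₂, hA⟩ := hA
  exact ⟨k, W₁, b₁, c • W₂, c • b₂, fun x => by simp [hA, Matrix.smul_mulVec]⟩

theorem strongDual_apply_eq_sum (ℓ : StrongDual ℝ (Fin m → ℝ)) (x : Fin m → ℝ) :
    ℓ x = ∑ j, ℓ (Pi.single j 1) * x j := by
  conv_lhs => rw [← Finset.univ_sum_single x]
  rw [map_sum]
  refine Finset.sum_congr rfl fun j _ => ?_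
  rw [mul_comm, ← smul_eq_mul, ← map_smul, ← Pi.single_smul, smul_eq_mul, mul_one]

theorem isReLUNet_relu_smul (ℓ : StrongDual ℝ (Fin m → ℝ)) (b : ℝ) (v : Fin p → ℝ) :
    IsReLUNet fun x => max (ℓ x + b) 0 • v := by
  refine ⟨1, Matrix.of fun _ j => ℓ (Pi.single j 1), fun _ => b, Matrix.of fun i _ => v i, 0,
    fun x => ?_⟩
  ext i
  simp [Matrix.mulVec, dotProduct, strongDual_apply_eq_sum ℓ x, mul_comm]

theorem isReLUNet_smul_of_mem_reluSpan {h : (Fin m → ℝ) → ℝ} (hh : h ∈ reluSpan (Fin m → ℝ))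
    (v : Fin p → ℝ) : IsReLUNet fun x => h x • v := by
  induction hh using Submodule.span_induction with
  | mem _ hu => obtain ⟨⟨ℓ, b⟩, rfl⟩ := hu; exact isReLUNet_relu_smul ℓ b v
  | zero => convert (isReLUNet_zero (m := m) (p := p)) using 1; funext x; simp
  | add _ _ _ _ h₁ h₂ => convert h₁.add h₂ using 1; funext x; simp [add_smul]
  | smul c _ _ h => convert h.const_smul c using 1; funext x; simp [smul_smul]

theorem isReLUNet_of_forall_mem_reluSpan {A : (Fin m → ℝ) → Fin p → ℝ}
    (hA : ∀ i, (fun x => A x i) ∈ reluSpan (Fin m → ℝ)) : IsReLUNet A := by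
  have hsum : A = ∑ i, fun x => A x i • Pi.single i 1 := by
    ext x j
    simp [Finset.sum_apply, Pi.single_apply]
  rw [hsum]
  exact Finset.sum_induction _ IsReLUNet (fun _ _ => IsReLUNet.add) isReLUNet_zero
    fun i _ => isReLUNet_smul_of_mem_reluSpan (hA i) _

theorem exists_isReLUNet_near {K : Set (Fin m → ℝ)} (hK : IsCompact K)
    {F : (Fin m → ℝ) → Fin p → ℝ} (hF : ContinuousOn F K) {ε : ℝ} (hε : 0 < ε) :
    ∃ A, IsReLUNet A ∧ ∀ x ∈ K, ‖A x - F x‖ ≤ ε := by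
  choose h hh hhF using fun i => exists_mem_reluSpan_near hK
    ((continuous_apply i).comp_continuousOn hF) hε
  refine ⟨fun x i => h i x, isReLUNet_of_forall_mem_reluSpan hh, fun x hx => ?_⟩
  exact (pi_norm_le_iff_of_nonneg hε.le).2 fun i => hhF i x hx

end Networks

section Recurrence

variable {m : ℕ}

theorem continuous_compSeq {G : ℕ → (Fin m → ℝ) → Fin m → ℝ} {n : ℕ}
    (hG : ∀ t, 1 ≤ t → t ≤ n → Continuous (G t)) : Continuous (compSeq G n) := by
  induction n with
  | zero => exact continuous_id
  | succ n ih =>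
    exact (hG (n + 1) (by omega) le_rfl).comp (ih fun t h₁ h₂ => hG t h₁ (by omega))

theorem scaleNetIter_update_of_lt (T : (Fin m → ℝ) → Fin m → ℝ)
    (A : ℕ → (Fin m → ℝ) → Fin m → ℝ) {s t : ℕ} (hts : t < s) (N : (Fin m → ℝ) → Fin m → ℝ) :
    scaleNetIter T (Function.update A s N) t = scaleNetIter T A t := by
  induction t with
  | zero => rfl
  | succ t ih =>
    funext x
    simp only [scaleNetIter, ih (by omega), Function.update_of_ne (by omega : t + 1 ≠ s)]

/-- `N` approximates `G - T` on a closed neighbourhood of `K`, on which `G` is uniformly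
continuous, so the step tolerates input errors up to `η`. -/
theorem exists_adapter_near {p : ℕ} {K : Set (Fin m → ℝ)} (hK : IsCompact K)
    {T G : (Fin m → ℝ) → Fin p → ℝ} (hT : Continuous T) (hG : Continuous G) {ε : ℝ}
    (hε : 0 < ε) :
    ∃ η > 0, ∃ N, IsReLUNet N ∧ ∀ c ∈ K, ∀ y, ‖y - c‖ ≤ η → ‖T y + N y - G c‖ ≤ ε := by
  set K₁ := Metric.cthickening 1 K
  have hK₁ : IsCompact K₁ := hK.cthickening
  obtain ⟨η₀, hη₀, hGuc⟩ := Metric.uniformContinuousOn_iff.1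
    (hK₁.uniformContinuousOn_of_continuous hG.continuousOn) (ε / 2) (half_pos hε)
  obtain ⟨N, hN, hNnear⟩ :=
    exists_isReLUNet_near hK₁ (hG.sub hT).continuousOn (half_pos hε)
  refine ⟨min (η₀ / 2) 1, by positivity, N, hN, fun c hc y hy => ?_⟩
  have hcK₁ : c ∈ K₁ := Metric.self_subset_cthickening K hc
  have hyK₁ : y ∈ K₁ := Metric.mem_cthickening_of_dist_le y c 1 K hc
    (by rw [dist_eq_norm]; exact hy.trans (min_le_right _ _))
  have hGyc : ‖G y - G c‖ ≤ ε / 2 := by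
    rw [← dist_eq_norm]
    refine (hGuc y hyK₁ c hcK₁ ?_).le
    rw [dist_eq_norm]
    linarith [min_le_left (η₀ / 2) 1]
  calc ‖T y + N y - G c‖ = ‖(N y - (G y - T y)) + (G y - G c)‖ := by congr 1; abel
    _ ≤ ‖N y - (G y - T y)‖ + ‖G y - G c‖ := norm_add_le _ _
    _ ≤ ε / 2 + ε / 2 := add_le_add (hNnear y hyK₁) hGyc
    _ = ε := add_halves ε

theorem exists_adapters_near_compSeq {K : Set (Fin m → ℝ)} (hK : IsCompact K)
    {T : (Fin m → ℝ) → Fin m → ℝ} (hT : Continuous T) {G : ℕ → (Fin m → ℝ) → Fin m → ℝ}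
    {n : ℕ} (hG : ∀ t, 1 ≤ t → t ≤ n → Continuous (G t)) {δ : ℝ} (hδ : 0 < δ) :
    ∃ A : ℕ → (Fin m → ℝ) → Fin m → ℝ, (∀ t, 1 ≤ t → t ≤ n → IsReLUNet (A t)) ∧
      ∀ x ∈ K, ‖scaleNetIter T A n x - compSeq G n x‖ ≤ δ := by
  induction n generalizing δ with
  | zero => exact ⟨0, fun t h₁ h₂ => by omega, fun x _ => by simp [scaleNetIter, compSeq, hδ.le]⟩
  | succ n ih =>
    have hGn : ∀ t, 1 ≤ t → t ≤ n → Continuous (G t) := fun t h₁ h₂ => hG t h₁ (by omega)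
    obtain ⟨η, hη, N, hN, hNnear⟩ := exists_adapter_near (hK.image (continuous_compSeq hGn)) hT
      (hG (n + 1) (by omega) le_rfl) hδ
    obtain ⟨A, hA, hAnear⟩ := ih hGn hη
    refine ⟨Function.update A (n + 1) N, fun t h₁ h₂ => ?_, fun x hx => ?_⟩
    · rcases h₂.eq_or_lt with rfl | ht
      · simpa using hN
      · rw [Function.update_of_ne ht.ne]
        exact hA t h₁ (by omega)
    · simp only [scaleNetIter, compSeq, scaleNetIter_update_of_lt T A n.lt_succ_self,
        Function.update_self]
      exact hNnear _ ⟨x, hx, rfl⟩ _ (hAnear x hx)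

end Recurrence

theorem scalenet_tracks_composition_general
    (m : ℕ)
    (T : (Fin m → ℝ) → (Fin m → ℝ)) (hT : Continuous T)
    (n : ℕ)
    (G : ℕ → (Fin m → ℝ) → (Fin m → ℝ))
    (hG : ∀ t, 1 ≤ t → t ≤ n → Continuous (G t))
    (ε : ℝ) (hε : 0 < ε) :
    ∃ A : ℕ → (Fin m → ℝ) → (Fin m → ℝ),
      (∀ t, 1 ≤ t → t ≤ n → IsReLUNet (A t)) ∧
      ∀ x ∈ Set.Icc (0 : Fin m → ℝ) 1,
        ‖scaleNetIter T A n x - compSeq G n x‖ ≤ ε :=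
  exists_adapters_near_compSeq isCompact_Icc hT hG hε

/-- The n-step ScaleNet recurrence with a fixed shared layer `T` and per-step adapters
can uniformly track any prescribed composition `G_n ∘ ⋯ ∘ G₁` of `n` continuous maps
on the input cube `[0,1]^m`. -/
theorem scalenet_tracks_composition
    (m : ℕ) (hm : 1 ≤ m)
    (T : (Fin m → ℝ) → (Fin m → ℝ)) (hT : Continuous T)
    (n : ℕ) (hn : 1 ≤ n)
    (G : ℕ → (Fin m → ℝ) → (Fin m → ℝ))
    (hG : ∀ t, 1 ≤ t → t ≤ n → Continuous (G t))
    (ε : ℝ) (hε : 0 < ε) :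
    ∃ A : ℕ → (Fin m → ℝ) → (Fin m → ℝ),
      (∀ t, 1 ≤ t → t ≤ n → IsReLUNet (A t)) ∧
      ∀ x ∈ Set.Icc (0 : Fin m → ℝ) 1,
        ‖scaleNetIter T A n x - compSeq G n x‖ ≤ ε :=
  scalenet_tracks_composition_general m T hT n G hG ε hε
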